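/- (Proposition 4, Nash equilibrium under generalized uniform pricing) Assume ∑ᵢ yᵢ*(p̄) > D and let quantities (qᵢ*) satisfy ∑ᵢ qᵢ* = D and 0 < qᵢ* ≤ yᵢ*(p̄) for all i. Then the bid profile (pᵢ*, qᵢ*) = (0, qᵢ*) for all suppliers i is a pure Nash equilibrium of the generalized uniform-pricing game: at this profile the clearing price is p̄ and each supplier earns Rᵢ(qᵢ*; p̄); and for every supplier i, every unilateral deviation (pᵢ', qᵢ') ∈ [0, p̄] × [0, ∞), and every merit-order-optimal allocation with clearing price determined by the pricing rule after the deviation, supplier i's payoff does not exceed Rᵢ(qᵢ*; p̄). -/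

import Mathlib

/-!
At the zero-bid profile every supplier has the best merit, so the operator dispatches all of
them to capacity, sheds nothing, and the price is set by the operator's cap `p̄`. After a
deviation by supplier `i` the price is still at most `p̄`. If `i` is dispatched at most
`qᵢ*`, it cannot gain, because `Rᵢ(·; p̄)` has slope `p̄ - λ Fᵢ ≥ 0` below `yᵢ*(p̄)`. If it is
dispatched more, some rival is left below capacity; merit-order optimality then forces `i`'s
bid back to `0` and the shed load to `0`, so the price collapses to `0` and `i` earns
nothing positive.
-/

open MeasureTheory Set

/-- The cumulative distribution function `F(t) = P(X ≤ t)` of a random variable `X`. -/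
noncomputable def cdfOf {Ω : Type*} [MeasurableSpace Ω] (μ : Measure Ω) (X : Ω → ℝ) (t : ℝ) : ℝ :=
  (μ {ω | X ω ≤ t}).toReal

/-- The generalized inverse `F⁻¹(u) = inf {t ≥ 0 : F(t) ≥ u}`. -/
noncomputable def geninv (F : ℝ → ℝ) (u : ℝ) : ℝ :=
  sInf {t : ℝ | 0 ≤ t ∧ u ≤ F t}

/-- The optimal commitment function `y*(π) = F⁻¹(min(π/λ, 1))`. -/
noncomputable def ystar (F : ℝ → ℝ) (lam : ℝ) (pr : ℝ) : ℝ :=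
  geninv F (min (pr / lam) 1)

/-- The expected profit `R(x; π) = x·π − λ·E[(x − X)⁺]` of a supplier paid day-ahead
price `π` for committed quantity `x`, with real-time penalty price `λ`. -/
noncomputable def profit {Ω : Type*} [MeasurableSpace Ω] (μ : Measure Ω) (X : Ω → ℝ)
    (lam : ℝ) (pr : ℝ) (x : ℝ) : ℝ :=
  x * pr - lam * ∫ ω, max (x - X ω) 0 ∂μ

/-- Extend a quantity/price/allocation vector over the suppliers `Fin I` to the index set
`Option (Fin I)`, where `none` stands for the system operator (supplier `0`), whose value
is `a0`. -/
def extOp {I : ℕ} (a0 : ℝ) (a : Fin I → ℝ) : Option (Fin I) → ℝ :=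
  fun j => j.elim a0 a

/-- Merit-order-optimal allocation: the operator is supplier `0` with bid price `p̄` and
quantity `D`; the allocation `(x₀, x)` is feasible and maximizes
`∑_{i=0}^{I} (p̄ − pᵢ)·xᵢ` subject to `∑_{i=0}^{I} xᵢ = D` and `0 ≤ xᵢ ≤ qᵢ`. -/
def MeritOpt {I : ℕ} (pbar D : ℝ) (p q : Fin I → ℝ) (x0 : ℝ) (x : Fin I → ℝ) : Prop :=
  (0 ≤ x0 ∧ x0 ≤ D ∧ (∀ i, 0 ≤ x i ∧ x i ≤ q i) ∧ x0 + ∑ i, x i = D) ∧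
  ∀ (y0 : ℝ) (y : Fin I → ℝ),
    0 ≤ y0 → y0 ≤ D → (∀ i, 0 ≤ y i ∧ y i ≤ q i) → y0 + ∑ i, y i = D →
    (pbar - pbar) * y0 + ∑ i, (pbar - p i) * y i
      ≤ (pbar - pbar) * x0 + ∑ i, (pbar - p i) * x i

/-- The clearing price rule: let `P` be the maximum bid price among indices (including the
operator, with bid price `p̄` and quantity `D`) with `xᵢ > 0`; if some index `i` with
`pᵢ = P` and `xᵢ > 0` has `xᵢ < qᵢ`, the clearing price is `P`; otherwise it is the
minimum bid price among indices (including the operator) with `xᵢ = 0`. -/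
def IsClearingPrice {I : ℕ} (pbar D : ℝ) (p q : Fin I → ℝ) (x0 : ℝ) (x : Fin I → ℝ)
    (c : ℝ) : Prop :=
  (∃ i : Option (Fin I), 0 < extOp x0 x i ∧ extOp x0 x i < extOp D q i ∧
      (∀ k : Option (Fin I), 0 < extOp x0 x k → extOp pbar p k ≤ extOp pbar p i) ∧
      c = extOp pbar p i) ∨
  ((¬ ∃ i : Option (Fin I), 0 < extOp x0 x i ∧ extOp x0 x i < extOp D q i ∧
      (∀ k : Option (Fin I), 0 < extOp x0 x k → extOp pbar p k ≤ extOp pbar p i)) ∧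
    ∃ j : Option (Fin I), extOp x0 x j = 0 ∧
      (∀ k : Option (Fin I), extOp x0 x k = 0 → extOp pbar p j ≤ extOp pbar p k) ∧
      c = extOp pbar p j)


section Profit

variable {Ω : Type*} [MeasurableSpace Ω] {μ : Measure Ω} {X : Ω → ℝ} {lam pr : ℝ}

lemma cdfOf_mono [IsFiniteMeasure μ] : Monotone (cdfOf μ X) := fun _ _ hab =>
  ENNReal.toReal_mono (measure_ne_top μ _) (measure_mono fun _ h => le_trans h hab)

lemma integrable_max_sub_zero [IsFiniteMeasure μ] (hX : Measurable X) (hXnn : ∀ ω, 0 ≤ X ω)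
    (x : ℝ) : Integrable (fun ω => max (x - X ω) 0) μ := by
  refine (integrable_const (max x 0)).mono'
    ((measurable_const.sub hX).max measurable_const).aestronglyMeasurable
    (Filter.Eventually.of_forall fun ω => ?_)
  rw [Real.norm_eq_abs, abs_of_nonneg (le_max_right _ _)]
  exact max_le_max (by linarith [hXnn ω]) le_rfl

/-- Raising the commitment from `a` to `b` adds at most `b - a` to the shortfall, and only
on the event `X ≤ b`. -/
lemma integral_max_sub_zero_le [IsFiniteMeasure μ] (hX : Measurable X) (hXnn : ∀ ω, 0 ≤ X ω)
    {a b : ℝ} (hab : a ≤ b) :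
    ∫ ω, max (b - X ω) 0 ∂μ ≤ ∫ ω, max (a - X ω) 0 ∂μ + cdfOf μ X b * (b - a) := by
  have hs : MeasurableSet {ω | X ω ≤ b} := hX measurableSet_Iic
  have hind : Integrable ({ω | X ω ≤ b}.indicator fun _ => b - a) μ :=
    (integrable_const _).indicator hs
  have hpt : ∀ ω, max (b - X ω) 0
      ≤ max (a - X ω) 0 + {ω | X ω ≤ b}.indicator (fun _ => b - a) ω := by
    intro ω
    by_cases h : X ω ≤ b
    · rw [indicator_of_mem (show ω ∈ {ω | X ω ≤ b} from h)]
      exact max_le (by linarith [le_max_left (a - X ω) 0])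
        (by linarith [le_max_right (a - X ω) 0])
    · rw [indicator_of_notMem (show ω ∉ {ω | X ω ≤ b} from h), add_zero]
      exact max_le (by linarith [le_max_right (a - X ω) 0]) (le_max_right _ _)
  calc ∫ ω, max (b - X ω) 0 ∂μ
      ≤ ∫ ω, (max (a - X ω) 0 + {ω | X ω ≤ b}.indicator (fun _ => b - a) ω) ∂μ :=
        integral_mono (integrable_max_sub_zero hX hXnn b)
          ((integrable_max_sub_zero hX hXnn a).add hind) hpt
    _ = ∫ ω, max (a - X ω) 0 ∂μ + cdfOf μ X b * (b - a) := by
        rw [integral_add (integrable_max_sub_zero hX hXnn a) hind, integral_indicator_const _ hs,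
          smul_eq_mul]
        rfl

lemma profit_le_profit_of_mul_cdfOf_le [IsFiniteMeasure μ] (hX : Measurable X)
    (hXnn : ∀ ω, 0 ≤ X ω) (hlam : 0 ≤ lam) {a b : ℝ} (hab : a ≤ b)
    (hF : lam * cdfOf μ X b ≤ pr) : profit μ X lam pr a ≤ profit μ X lam pr b := by
  have h := mul_le_mul_of_nonneg_left (integral_max_sub_zero_le (μ := μ) hX hXnn hab) hlam
  unfold profit
  nlinarith [mul_nonneg (sub_nonneg.2 hab) (sub_nonneg.2 hF)]

lemma profit_le_profit_of_price_le {x pr' : ℝ} (hx : 0 ≤ x) (hpr : pr ≤ pr') :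
    profit μ X lam pr x ≤ profit μ X lam pr' x := by
  unfold profit
  nlinarith

lemma profit_zero_right (hXnn : ∀ ω, 0 ≤ X ω) : profit μ X lam pr 0 = 0 := by
  have h : (fun ω => max (0 - X ω) 0) = fun _ => 0 :=
    funext fun ω => max_eq_right (by linarith [hXnn ω])
  simp only [profit, h, integral_zero, zero_mul, mul_zero, sub_zero]

lemma profit_zero_price_nonpos (hlam : 0 ≤ lam) (x : ℝ) : profit μ X lam 0 x ≤ 0 := by
  have : 0 ≤ ∫ ω, max (x - X ω) 0 ∂μ := integral_nonneg fun _ => le_max_right _ _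
  simp only [profit, mul_zero, zero_sub, neg_nonpos]
  positivity

end Profit

/-- Below `F⁻¹(u)` the function `F` stays below `u`, so left continuity caps `F` at `F⁻¹(u)`. -/
lemma apply_geninv_le {F : ℝ → ℝ} {u : ℝ} (hpos : 0 < geninv F u)
    (hF : ContinuousWithinAt F (Iio (geninv F u)) (geninv F u)) : F (geninv F u) ≤ u := by
  have hbelow : ∀ t ∈ Ioo 0 (geninv F u), F t ≤ u := fun t ht =>
    (not_le.1 fun h => notMem_of_lt_csInf ht.2 ⟨0, fun _ hs => hs.1⟩ ⟨ht.1.le, h⟩).le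
  exact le_of_tendsto hF (Filter.eventually_of_mem (Ioo_mem_nhdsLT hpos) hbelow)

lemma mul_le_of_le_ystar {F : ℝ → ℝ} (hFm : Monotone F) (hFc : Continuous F) {lam pr b : ℝ}
    (hlam : 0 < lam) (hb : 0 < b) (hby : b ≤ ystar F lam pr) : lam * F b ≤ pr := by
  have hF : F (ystar F lam pr) ≤ pr / lam :=
    (apply_geninv_le (hb.trans_le hby) hFc.continuousWithinAt).trans (min_le_left _ _)
  rw [mul_comm, ← le_div_iff₀ hlam]
  exact (hFm hby).trans hF

lemma sum_mul_update {ι R : Type*} [Fintype ι] [DecidableEq ι] [CommRing R] (w x : ι → R)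
    (j : ι) (b : R) :
    ∑ k, w k * Function.update x j b k = ∑ k, w k * x k + w j * (b - x j) := by
  have h : ∀ k, w k * Function.update x j b k
      = w k * x k + if k = j then w j * (b - x j) else 0 := by
    intro k
    rcases eq_or_ne k j with rfl | hkj
    · simp only [Function.update_self, if_true]; ring
    · simp only [Function.update_of_ne hkj, hkj, if_false, add_zero]
  simp only [h, Finset.sum_add_distrib, Finset.sum_ite_eq', Finset.mem_univ, if_true]

lemma exists_ne_lt_of_sum_le {ι M : Type*} [Fintype ι] [AddCommMonoid M] [LinearOrder M]
    [IsOrderedCancelAddMonoid M] {x q : ι → M} {i : ι}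
    (hsum : ∑ k, x k ≤ ∑ k, q k) (hi : q i < x i) : ∃ j, j ≠ i ∧ x j < q j := by
  by_contra! h
  have hqx : ∀ k, q k ≤ x k := fun k => (eq_or_ne k i).elim (· ▸ hi.le) (h k)
  exact (Finset.sum_lt_sum (fun k _ => hqx k) ⟨i, Finset.mem_univ i, hi⟩).not_ge hsum

namespace MeritOpt

variable {I : ℕ} {pbar D x0 : ℝ} {p q x : Fin I → ℝ}

lemma eq_of_zero_bids (hx : MeritOpt pbar D (fun _ => 0) q x0 x) (hpbar : 0 < pbar)
    (hq : ∀ i, 0 ≤ q i) (hqsum : ∑ i, q i = D) : x = q ∧ x0 = 0 := by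
  obtain ⟨⟨-, -, hxq, hxsum⟩, hopt⟩ := hx
  have hobj := hopt 0 q le_rfl (hqsum ▸ Finset.sum_nonneg fun i _ => hq i)
    (fun i => ⟨hq i, le_rfl⟩) (by rw [zero_add, hqsum])
  simp only [sub_self, zero_mul, zero_add, sub_zero, ← Finset.mul_sum] at hobj
  have hle : ∑ i, q i ≤ ∑ i, x i := le_of_mul_le_mul_left hobj hpbar
  have hx : x = q := funext fun i => by
    by_contra hne
    exact hle.not_gt (Finset.sum_lt_sum (fun k _ => (hxq k).2)
      ⟨i, Finset.mem_univ i, lt_of_le_of_ne (hxq i).2 hne⟩)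
  subst hx
  exact ⟨rfl, by linarith⟩

/-- Exchange argument: shifting load from `i` to `j` must not raise the objective. -/
lemma bid_le_of_lt_quantity (hx : MeritOpt pbar D p q x0 x) {i j : Fin I} (hij : i ≠ j)
    (hi : 0 < x i) (hj : x j < q j) : p i ≤ p j := by
  obtain ⟨⟨hx0, hx0D, hxq, hxsum⟩, hopt⟩ := hx
  set ε := min (x i) (q j - x j)
  have hε : 0 < ε := lt_min hi (by linarith)
  have hεi : ε ≤ x i := min_le_left _ _
  have hεj : ε ≤ q j - x j := min_le_right _ _
  set y := Function.update (Function.update x i (x i - ε)) j (x j + ε)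
  have hsum : ∀ w : Fin I → ℝ, ∑ k, w k * y k = ∑ k, w k * x k + w i * -ε + w j * ε := by
    intro w
    rw [sum_mul_update, sum_mul_update, Function.update_of_ne hij.symm]
    ring
  have hyq : ∀ k, 0 ≤ y k ∧ y k ≤ q k := by
    intro k
    rcases eq_or_ne k j with rfl | hkj
    · simp only [y, Function.update_self]
      exact ⟨by linarith [hxq k], by linarith⟩
    rcases eq_or_ne k i with rfl | hki
    · simp only [y, Function.update_of_ne hkj, Function.update_self]
      exact ⟨by linarith, by linarith [hxq k]⟩
    · simp only [y, Function.update_of_ne hkj, Function.update_of_ne hki]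
      exact hxq k
  have hy : ∑ k, y k = ∑ k, x k := by simpa using hsum fun _ => 1
  have hobj := hopt x0 y hx0 hx0D hyq (by rw [hy, hxsum])
  rw [hsum] at hobj
  nlinarith

lemma pbar_le_bid_of_lt_quantity (hx : MeritOpt pbar D p q x0 x) {j : Fin I} (h0 : 0 < x0)
    (hj : x j < q j) : pbar ≤ p j := by
  obtain ⟨⟨hx0, hx0D, hxq, hxsum⟩, hopt⟩ := hx
  set ε := min x0 (q j - x j)
  have hε : 0 < ε := lt_min h0 (by linarith)
  have hε0 : ε ≤ x0 := min_le_left _ _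
  have hεj : ε ≤ q j - x j := min_le_right _ _
  set y := Function.update x j (x j + ε)
  have hsum : ∀ w : Fin I → ℝ, ∑ k, w k * y k = ∑ k, w k * x k + w j * ε := by
    intro w
    rw [sum_mul_update]
    ring
  have hyq : ∀ k, 0 ≤ y k ∧ y k ≤ q k := by
    intro k
    rcases eq_or_ne k j with rfl | hkj
    · simp only [y, Function.update_self]
      exact ⟨by linarith [hxq k], by linarith⟩
    · simp only [y, Function.update_of_ne hkj]
      exact hxq k
  have hy : ∑ k, y k = ∑ k, x k + ε := by simpa using hsum fun _ => 1
  have hobj := hopt (x0 - ε) y (by linarith) (by linarith) hyq (by linarith)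
  rw [hsum] at hobj
  nlinarith

end MeritOpt

namespace IsClearingPrice

variable {I : ℕ} {pbar D x0 c : ℝ} {p q x : Fin I → ℝ}

lemma exists_eq_bid (hc : IsClearingPrice pbar D p q x0 x c) :
    ∃ k, c = extOp pbar p k := by
  rcases hc with ⟨k, -, -, -, hk⟩ | ⟨-, k, -, -, hk⟩ <;> exact ⟨k, hk⟩

lemma le_pbar (hc : IsClearingPrice pbar D p q x0 x c) (hp : ∀ i, p i ≤ pbar) : c ≤ pbar := by
  obtain ⟨_ | k, rfl⟩ := hc.exists_eq_bid
  exacts [le_rfl, hp k]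

/-- When every supplier bids `0` and is dispatched to capacity, the only unused index is the
operator, so the price is set by the cap. -/
lemma eq_pbar_of_zero_bids (hc : IsClearingPrice pbar D (fun _ => 0) q 0 q c)
    (hq : ∀ i, 0 < q i) : c = pbar := by
  rcases hc with ⟨_ | k, hpos, hlt, -, -⟩ | ⟨-, _ | k, hzero, -, hk⟩
  · exact absurd hpos (lt_irrefl 0)
  · exact absurd hlt (lt_irrefl _)
  · exact hk
  · exact absurd hzero (hq k).ne'

lemma eq_zero_of_zero_bids (hc : IsClearingPrice pbar D (fun _ => 0) q 0 x c)
    (hpbar : 0 < pbar) {j : Fin I} (hj0 : 0 ≤ x j) (hjq : x j < q j) : c = 0 := by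
  rcases hc with ⟨_ | k, hpos, -, -, hk⟩ | ⟨hmarg, _ | k, -, hmin, hk⟩
  · exact absurd hpos (lt_irrefl 0)
  · exact hk
  · rcases hj0.lt_or_eq with hjpos | hjzero
    · refine absurd ⟨some j, hjpos, hjq, ?_⟩ hmarg
      rintro (_ | k) hk
      exacts [absurd hk (lt_irrefl 0), le_rfl]
    · exact absurd (hmin (some j) hjzero.symm) hpbar.not_ge
  · exact hk

end IsClearingPrice

open Function in
lemma deviation_outcome {I : ℕ} {pbar D p' q' x0 c : ℝ} {q x : Fin I → ℝ} {i : Fin I}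
    (hpbar : 0 < pbar) (hqi : 0 ≤ q i) (hqsum : ∑ k, q k = D) (hp'0 : 0 ≤ p')
    (hp' : p' ≤ pbar) (hx : MeritOpt pbar D (update (fun _ => 0) i p') (update q i q') x0 x)
    (hc : IsClearingPrice pbar D (update (fun _ => 0) i p') (update q i q') x0 x c) :
    c ≤ pbar ∧ (x i ≤ q i ∨ c = 0) := by
  refine ⟨hc.le_pbar fun k => ?_, (le_or_gt (x i) (q i)).imp_right fun hxi => ?_⟩
  · rcases eq_or_ne k i with rfl | hk
    · simpa using hp'
    · simpa [hk] using hpbar.le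
  obtain ⟨hx0, -, hxq, hxsum⟩ := hx.1
  obtain ⟨j, hji, hxj⟩ := exists_ne_lt_of_sum_le (x := x) (by linarith) hxi
  have hxj' : x j < update q i q' j := by rwa [update_of_ne hji]
  have hp'_eq : p' = 0 := le_antisymm
    (by simpa [hji] using hx.bid_le_of_lt_quantity hji.symm (hqi.trans_lt hxi) hxj') hp'0
  have hx0_eq : x0 = 0 := by
    by_contra hne
    have h := hx.pbar_le_bid_of_lt_quantity (lt_of_le_of_ne hx0 (Ne.symm hne)) hxj'
    simp only [update_of_ne hji] at h
    linarith
  subst hp'_eq hx0_eq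
  rw [update_eq_self] at hc
  exact hc.eq_zero_of_zero_bids hpbar (hxq j).1 hxj'

theorem up_general_zero_bid_equilibrium_general
    {Ω : Type*} [MeasurableSpace Ω] (μ : Measure Ω) [IsProbabilityMeasure μ]
    (I : ℕ)
    (X : Fin I → Ω → ℝ) (hX : ∀ i, Measurable (X i)) (hXnn : ∀ i ω, 0 ≤ X i ω)
    (hFc : ∀ i, Continuous (cdfOf μ (X i)))
    (lam : ℝ) (hlam : 0 < lam) (pbar : ℝ) (hpbar : 0 < pbar)
    (D : ℝ)
    (q : Fin I → ℝ) (hqsum : ∑ i, q i = D)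
    (hq : ∀ i, 0 < q i ∧ q i ≤ ystar (cdfOf μ (X i)) lam pbar) :
    -- at the profile, the allocation is `x = q`, `x₀ = 0`, and the clearing price is `p̄`
    (∀ (x0 : ℝ) (x : Fin I → ℝ), MeritOpt pbar D (fun _ => (0:ℝ)) q x0 x →
      (∀ i, x i = q i) ∧ x0 = 0 ∧
      ∀ c : ℝ, IsClearingPrice pbar D (fun _ => (0:ℝ)) q x0 x c → c = pbar) ∧
    -- no unilateral deviation is profitable
    (∀ (i : Fin I) (p' q' : ℝ), 0 ≤ p' → p' ≤ pbar → 0 ≤ q' →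
      ∀ (x0 : ℝ) (x : Fin I → ℝ),
        MeritOpt pbar D (Function.update (fun _ => (0:ℝ)) i p')
          (Function.update q i q') x0 x →
        ∀ c : ℝ, IsClearingPrice pbar D (Function.update (fun _ => (0:ℝ)) i p')
          (Function.update q i q') x0 x c →
          profit μ (X i) lam c (x i) ≤ profit μ (X i) lam pbar (q i)) := by
  refine ⟨fun x0 x hx => ?_, fun i p' q' hp'0 hp' _ x0 x hx c hc => ?_⟩
  · obtain ⟨rfl, rfl⟩ := hx.eq_of_zero_bids hpbar (fun i => (hq i).1.le) hqsum
    exact ⟨fun _ => rfl, rfl, fun c hc => hc.eq_pbar_of_zero_bids fun i => (hq i).1⟩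
  have hcdf : lam * cdfOf μ (X i) (q i) ≤ pbar :=
    mul_le_of_le_ystar cdfOf_mono (hFc i) hlam (hq i).1 (hq i).2
  have hmono : ∀ a ≤ q i, profit μ (X i) lam pbar a ≤ profit μ (X i) lam pbar (q i) :=
    fun a ha => profit_le_profit_of_mul_cdfOf_le (hX i) (hXnn i) hlam.le ha hcdf
  obtain ⟨hc_le, hxi | rfl⟩ := deviation_outcome hpbar (hq i).1.le hqsum hp'0 hp' hx hc
  · calc profit μ (X i) lam c (x i) ≤ profit μ (X i) lam pbar (x i) :=
          profit_le_profit_of_price_le (hx.1.2.2.1 i).1 hc_le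
      _ ≤ profit μ (X i) lam pbar (q i) := hmono _ hxi
  · calc profit μ (X i) lam 0 (x i) ≤ 0 := profit_zero_price_nonpos hlam.le _
      _ = profit μ (X i) lam pbar 0 := (profit_zero_right (hXnn i)).symm
      _ ≤ profit μ (X i) lam pbar (q i) := hmono 0 (hq i).1.le

/-- Proposition 4 (Nash equilibrium under generalized uniform pricing): if
`∑ᵢ yᵢ*(p̄) > D` and the quantities `qᵢ*` satisfy `∑ᵢ qᵢ* = D` and `0 < qᵢ* ≤ yᵢ*(p̄)`,
then the profile in which every supplier bids price `0` and quantity `qᵢ*` is a pure Nash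
equilibrium: at the profile every merit-order-optimal allocation commits each supplier to
`qᵢ*` with zero lost load and clearing price `p̄`, so supplier `i` earns `Rᵢ(qᵢ*; p̄)`; and
after any unilateral deviation `(pᵢ', qᵢ') ∈ [0, p̄] × [0, ∞)`, for every merit-order-optimal
allocation and clearing price determined by the pricing rule, supplier `i`'s payoff does not
exceed `Rᵢ(qᵢ*; p̄)`. -/
theorem up_general_zero_bid_equilibrium
    {Ω : Type*} [MeasurableSpace Ω] (μ : Measure Ω) [IsProbabilityMeasure μ]
    (I : ℕ) (hI : 2 ≤ I)
    (X : Fin I → Ω → ℝ) (hX : ∀ i, Measurable (X i)) (hXnn : ∀ i ω, 0 ≤ X i ω)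
    (Xbar : Fin I → ℝ) (hXbar : ∀ i, 0 < Xbar i)
    (hsupp : ∀ i, μ {ω | X i ω ≤ Xbar i} = 1)
    (hFc : ∀ i, Continuous (cdfOf μ (X i)))
    (hF0 : ∀ i, cdfOf μ (X i) 0 = 0) (hF1 : ∀ i, cdfOf μ (X i) (Xbar i) = 1)
    (lam : ℝ) (hlam : 0 < lam) (pbar : ℝ) (hpbar : 0 < pbar)
    (D : ℝ) (hD : 0 < D)
    (hadeq : D < ∑ i, ystar (cdfOf μ (X i)) lam pbar)
    (q : Fin I → ℝ) (hqsum : ∑ i, q i = D)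
    (hq : ∀ i, 0 < q i ∧ q i ≤ ystar (cdfOf μ (X i)) lam pbar) :
    -- at the profile, the allocation is `x = q`, `x₀ = 0`, and the clearing price is `p̄`
    (∀ (x0 : ℝ) (x : Fin I → ℝ), MeritOpt pbar D (fun _ => (0:ℝ)) q x0 x →
      (∀ i, x i = q i) ∧ x0 = 0 ∧
      ∀ c : ℝ, IsClearingPrice pbar D (fun _ => (0:ℝ)) q x0 x c → c = pbar) ∧
    -- no unilateral deviation is profitable
    (∀ (i : Fin I) (p' q' : ℝ), 0 ≤ p' → p' ≤ pbar → 0 ≤ q' →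
      ∀ (x0 : ℝ) (x : Fin I → ℝ),
        MeritOpt pbar D (Function.update (fun _ => (0:ℝ)) i p')
          (Function.update q i q') x0 x →
        ∀ c : ℝ, IsClearingPrice pbar D (Function.update (fun _ => (0:ℝ)) i p')
          (Function.update q i q') x0 x c →
          profit μ (X i) lam c (x i) ≤ profit μ (X i) lam pbar (q i)) :=
  up_general_zero_bid_equilibrium_general μ I X hX hXnn hFc lam hlam pbar hpbar D q hqsum hq
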